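/- arXiv:2110.00786 — 2 statements merged into one kernel-verified Lean document; each statement's English description precedes it below -/
import Mathlib

section
/- Let A be a commutative ring with identity and let (M_n)_{n ∈ ℕ} be an inverse system of A-modules, each of finite length. If N is a finitely presented A-module, then the natural A-module map (lim_n M_n) ⊗_A N → lim_n (M_n ⊗_A N), induced by the universal property of the inverse limit from the maps (lim_n M_n) ⊗_A N → M_n ⊗_A N, is an isomorphism. -/
/-!
Choose a presentation `A^m → A^k → N → 0`. Tensoring with `lim M` gives an exact row, and tensoring
levelwise and then passing to the limit gives another one: levelwise the sequences are exact, and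
`lim` preserves this because the systems `M n ⊗ A^m`, `M n ⊗ A^k` are Artinian, so the Mittag-Leffler
argument applies (descending chains of nonempty affine subspaces of an Artinian module stabilize).
On free modules of finite rank the comparison map is an isomorphism, as both sides are finite
products of copies of `lim M`; the five lemma then gives the claim for `N`.
-/

open TensorProduct

/-- The inverse (projective) limit of an `ℕ`-indexed inverse system of `A`-modules, realized as
the submodule of compatible families in the product. -/
def InvLimit {A : Type*} [CommRing A] (M : ℕ → Type*) [∀ n, AddCommGroup (M n)]
    [∀ n, Module A (M n)] (f : ∀ n, M (n + 1) →ₗ[A] M n) : Submodule A (∀ n, M n) where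
  carrier := {x | ∀ n, f n (x (n + 1)) = x n}
  add_mem' := by intro x y hx hy n; simp [hx n, hy n]
  zero_mem' := by intro n; simp
  smul_mem' := by intro a x hx n; simp [hx n]

/-- The canonical projection from the inverse limit to the `n`-th module. -/
def limProj {A : Type*} [CommRing A] (M : ℕ → Type*) [∀ n, AddCommGroup (M n)]
    [∀ n, Module A (M n)] (f : ∀ n, M (n + 1) →ₗ[A] M n) (n : ℕ) :
    InvLimit M f →ₗ[A] M n :=
  (LinearMap.proj n).comp (InvLimit M f).subtype

@[simp] lemma limProj_apply {A : Type*} [CommRing A] (M : ℕ → Type*) [∀ n, AddCommGroup (M n)]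
    [∀ n, Module A (M n)] (f : ∀ n, M (n + 1) →ₗ[A] M n) (n : ℕ) (x : InvLimit M f) :
    limProj M f n x = x.1 n := rfl

lemma invLimit_prop {A : Type*} [CommRing A] {M : ℕ → Type*} [∀ n, AddCommGroup (M n)]
    [∀ n, Module A (M n)] {f : ∀ n, M (n + 1) →ₗ[A] M n} (x : InvLimit M f) (n : ℕ) :
    f n (x.1 (n + 1)) = x.1 n := x.2 n

lemma tensorMem {A : Type*} [CommRing A] (M : ℕ → Type*) [∀ n, AddCommGroup (M n)]
    [∀ n, Module A (M n)] (f : ∀ n, M (n + 1) →ₗ[A] M n)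
    (N : Type*) [AddCommGroup N] [Module A N] (x : ↥(InvLimit M f) ⊗[A] N) :
    (fun n => LinearMap.rTensor N (limProj M f n) x) ∈
      InvLimit (fun n => M n ⊗[A] N) (fun n => LinearMap.rTensor N (f n)) := by
  intro n
  induction x using TensorProduct.induction_on with
  | zero => simp
  | tmul m y =>
      simp only [LinearMap.rTensor_tmul, limProj_apply]
      rw [invLimit_prop m n]
  | add a b ha hb => simp only [map_add, ha, hb]

theorem exists_forall_mem_of_surjOn {X : ℕ → Type*} (φ : ∀ n, X (n + 1) → X n)
    (W : ∀ n, Set (X n)) (hW₀ : (W 0).Nonempty) (hW : ∀ n, Set.SurjOn (φ n) (W (n + 1)) (W n)) :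
    ∃ x : ∀ n, X n, ∀ n, x n ∈ W n ∧ φ n (x (n + 1)) = x n := by
  choose lift hlift_mem hlift_eq using hW
  let x : ∀ n, W n := fun n =>
    Nat.rec (motive := fun n => W n) ⟨hW₀.choose, hW₀.choose_spec⟩
      (fun n w => ⟨lift n w.2, hlift_mem n w.2⟩) n
  exact ⟨fun n => x n, fun n => ⟨(x n).2, hlift_eq n (x n).2⟩⟩

theorem AffineSubspace.exists_forall_ge_eq_of_antitone {A V P : Type*} [Ring A] [AddCommGroup V]
    [Module A V] [AddTorsor V P] [IsArtinian A V] {U : ℕ → AffineSubspace A P}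
    (hU : Antitone U) (hne : ∀ k, (U k : Set P).Nonempty) : ∃ c, ∀ k, c ≤ k → U k = U c := by
  obtain ⟨c, hc⟩ := IsArtinian.monotone_stabilizes
    ⟨fun k => OrderDual.toDual (U k).direction, fun _ _ h => AffineSubspace.direction_le (hU h)⟩
  exact ⟨c, fun k hk => eq_of_direction_eq_of_nonempty_of_le (hc k hk).symm (hne k) (hU hk)⟩

instance isArtinian_tensor_pi {A T ι : Type*} [CommRing A] [AddCommGroup T] [Module A T]
    [IsArtinian A T] [Fintype ι] [DecidableEq ι] : IsArtinian A (T ⊗[A] (ι → A)) :=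
  isArtinian_of_linearEquiv (piScalarRight A A T ι).symm

theorem piScalarRight_rTensor {A T T' ι : Type*} [CommRing A] [AddCommGroup T] [Module A T]
    [AddCommGroup T'] [Module A T'] [Fintype ι] [DecidableEq ι] (φ : T →ₗ[A] T')
    (x : T ⊗[A] (ι → A)) :
    piScalarRight A A T' ι (φ.rTensor (ι → A) x) = fun i => φ (piScalarRight A A T ι x i) := by
  induction x using TensorProduct.induction_on with
  | zero => funext i; simp
  | tmul t v => funext i; simp
  | add a b ha hb => funext i; simp only [map_add, ha, hb, Pi.add_apply]

namespace InvLimit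

variable {A : Type*} [CommRing A] {M P Q : ℕ → Type*}
  [∀ n, AddCommGroup (M n)] [∀ n, Module A (M n)] [∀ n, AddCommGroup (P n)] [∀ n, Module A (P n)]
  [∀ n, AddCommGroup (Q n)] [∀ n, Module A (Q n)]
  {f : ∀ n, M (n + 1) →ₗ[A] M n} {g : ∀ n, P (n + 1) →ₗ[A] P n} {h : ∀ n, Q (n + 1) →ₗ[A] Q n}

def map (φ : ∀ n, M n →ₗ[A] P n) (hφ : ∀ n, g n ∘ₗ φ (n + 1) = φ n ∘ₗ f n) :
    InvLimit M f →ₗ[A] InvLimit P g :=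
  (LinearMap.pi fun n => φ n ∘ₗ limProj M f n).codRestrict _ fun x n => by
    simpa using (LinearMap.congr_fun (hφ n) (x.1 (n + 1))).trans (congrArg (φ n) (x.2 n))

/-- `iterImage f S k n` is the image of `S (n + k)` in `M n`. -/
def iterImage (f : ∀ n, M (n + 1) →ₗ[A] M n) (S : ∀ n, AffineSubspace A (M n)) :
    ℕ → ∀ n, AffineSubspace A (M n)
  | 0 => S
  | k + 1 => fun n => (iterImage f S k (n + 1)).map (f n).toAffineMap

theorem iterImage_nonempty {S : ∀ n, AffineSubspace A (M n)}
    (hne : ∀ n, (S n : Set (M n)).Nonempty) (k : ℕ) :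
    ∀ n, (iterImage f S k n : Set (M n)).Nonempty := by
  induction k with
  | zero => exact hne
  | succ k ih =>
    intro n
    rw [iterImage, AffineSubspace.coe_map]
    exact (ih (n + 1)).image _

theorem iterImage_antitone {S : ∀ n, AffineSubspace A (M n)}
    (hS : ∀ n, (S (n + 1)).map (f n).toAffineMap ≤ S n) (n : ℕ) :
    Antitone fun k => iterImage f S k n := by
  suffices ∀ k n, iterImage f S (k + 1) n ≤ iterImage f S k n from
    antitone_nat_of_succ_le fun k => this k n
  intro k
  induction k with
  | zero => exact hS
  | succ k ih => exact fun n => AffineSubspace.map_mono _ (ih (n + 1))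

/-- Mittag-Leffler: the images of `S (n + k)` in `M n` stabilize as `k` grows, and `f` maps the
stable images onto each other. -/
theorem exists_mem_forall_mem [∀ n, IsArtinian A (M n)] (S : ∀ n, AffineSubspace A (M n))
    (hne : ∀ n, (S n : Set (M n)).Nonempty)
    (hS : ∀ n, (S (n + 1)).map (f n).toAffineMap ≤ S n) :
    ∃ x ∈ InvLimit M f, ∀ n, x n ∈ S n := by
  choose c hc using fun n => AffineSubspace.exists_forall_ge_eq_of_antitone
    (iterImage_antitone hS n) (fun k => iterImage_nonempty (f := f) hne k n)
  have hsurj : ∀ n, Set.SurjOn (f n) (iterImage f S (c (n + 1)) (n + 1))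
      (iterImage f S (c n) n) := by
    intro n
    have hstable : iterImage f S (c n) n =
        (iterImage f S (c (n + 1)) (n + 1)).map (f n).toAffineMap := by
      rw [← hc n (max (c n) (c (n + 1)) + 1) (by omega),
        ← hc (n + 1) (max (c n) (c (n + 1))) (le_max_right _ _), iterImage]
    intro w hw
    rwa [hstable, AffineSubspace.coe_map] at hw
  obtain ⟨x, hx⟩ := exists_forall_mem_of_surjOn (fun n => f n)
    (fun n => (iterImage f S (c n) n : Set (M n))) (iterImage_nonempty hne _ 0) hsurj
  exact ⟨x, fun n => (hx n).2, fun n => iterImage_antitone hS n (Nat.zero_le _) (hx n).1⟩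

theorem exists_map_eq_of_forall_mem_range [∀ n, IsArtinian A (M n)] (φ : ∀ n, M n →ₗ[A] P n)
    (hφ : ∀ n, g n ∘ₗ φ (n + 1) = φ n ∘ₗ f n) (q : InvLimit P g)
    (hq : ∀ n, q.1 n ∈ LinearMap.range (φ n)) : ∃ x, map φ hφ x = q := by
  let fiber n : AffineSubspace A (M n) := (affineSpan A {q.1 n}).comap (φ n).toAffineMap
  have mem_fiber {n} {y : M n} : y ∈ fiber n ↔ φ n y = q.1 n := by
    simp [fiber, AffineSubspace.mem_comap, AffineSubspace.mem_affineSpan_singleton]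
  obtain ⟨x, hx, hxq⟩ := exists_mem_forall_mem (f := f) fiber
    (fun n => (hq n).imp fun _ => mem_fiber.2) (by
      rintro n _ ⟨y, hy : y ∈ fiber (n + 1), rfl⟩
      rw [mem_fiber] at hy
      rw [LinearMap.coe_toAffineMap, mem_fiber]
      calc φ n (f n y) = g n (φ (n + 1) y) := (LinearMap.congr_fun (hφ n) y).symm
        _ = q.1 n := by rw [hy]; exact q.2 n)
  exact ⟨⟨x, hx⟩, Subtype.ext <| funext fun n => mem_fiber.1 (hxq n)⟩

theorem map_surjective [∀ n, IsArtinian A (M n)] (φ : ∀ n, M n →ₗ[A] P n)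
    (hφ : ∀ n, g n ∘ₗ φ (n + 1) = φ n ∘ₗ f n) (hsurj : ∀ n, Function.Surjective (φ n)) :
    Function.Surjective (map φ hφ) :=
  fun q => exists_map_eq_of_forall_mem_range φ hφ q fun n => hsurj n _

theorem map_exact [∀ n, IsArtinian A (M n)] (φ : ∀ n, M n →ₗ[A] P n)
    (hφ : ∀ n, g n ∘ₗ φ (n + 1) = φ n ∘ₗ f n) (ψ : ∀ n, P n →ₗ[A] Q n)
    (hψ : ∀ n, h n ∘ₗ ψ (n + 1) = ψ n ∘ₗ g n) (hexact : ∀ n, Function.Exact (φ n) (ψ n)) :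
    Function.Exact (map φ hφ) (map ψ hψ) := by
  intro y
  constructor
  · intro hy
    exact exists_map_eq_of_forall_mem_range φ hφ y fun n => (hexact n _).1 (congrArg (·.1 n) hy)
  · rintro ⟨x, rfl⟩
    exact Subtype.ext <| funext fun n => (hexact n).apply_apply_eq_zero _

variable (M f)

def limTensor (N : Type*) [AddCommGroup N] [Module A N] :
    InvLimit M f ⊗[A] N →ₗ[A] InvLimit (fun n => M n ⊗[A] N) (fun n => (f n).rTensor N) :=
  (LinearMap.pi fun n => (limProj M f n).rTensor N).codRestrict _ (tensorMem M f N)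

def mapLTensor {N N' : Type*} [AddCommGroup N] [Module A N] [AddCommGroup N'] [Module A N']
    (q : N →ₗ[A] N') :
    InvLimit (fun n => M n ⊗[A] N) (fun n => (f n).rTensor N) →ₗ[A]
      InvLimit (fun n => M n ⊗[A] N') (fun n => (f n).rTensor N') :=
  map (fun n => q.lTensor (M n)) fun _ => by
    rw [LinearMap.rTensor_comp_lTensor, LinearMap.lTensor_comp_rTensor]

theorem mapLTensor_comp_limTensor {N N' : Type*} [AddCommGroup N] [Module A N] [AddCommGroup N']
    [Module A N'] (q : N →ₗ[A] N') :
    mapLTensor M f q ∘ₗ limTensor M f N = limTensor M f N' ∘ₗ q.lTensor (InvLimit M f) :=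
  LinearMap.ext fun x => Subtype.ext <| funext fun _ => LinearMap.congr_fun
    ((LinearMap.lTensor_comp_rTensor _ _ _).trans (LinearMap.rTensor_comp_lTensor _ _ _).symm) x

theorem limTensor_bijective_pi (ι : Type*) [Fintype ι] [DecidableEq ι] :
    Function.Bijective (limTensor M f (ι → A)) := by
  let e T [AddCommGroup T] [Module A T] := piScalarRight A A T ι
  constructor
  · rw [injective_iff_map_eq_zero]
    intro x hx
    apply (e _).injective
    funext i
    refine Subtype.ext <| funext fun n => ?_
    simpa [e] using (congrFun (piScalarRight_rTensor (limProj M f n) x) i).symm.trans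
      (congrArg (fun y => e _ (y.1 n) i) hx)
  · intro y
    let z : ι → InvLimit M f := fun i => ⟨fun n => e _ (y.1 n) i, fun n => by
      simpa [e] using (congrFun (piScalarRight_rTensor (f n) (y.1 (n + 1))) i).symm.trans
        (congrArg (e _ · i) (y.2 n))⟩
    refine ⟨(e _).symm z, Subtype.ext <| funext fun n => (e _).injective ?_⟩
    exact (piScalarRight_rTensor (limProj M f n) ((e _).symm z)).trans (by simp [z, e])

end InvLimit

/-- Lemma 2.1(a): for an inverse system `(M n)` of `A`-modules of finite length and a finitely
presented `A`-module `N`, the natural map `(lim M n) ⊗ N → lim (M n ⊗ N)` is an isomorphism. -/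
theorem tensor_limit_of_finitePresentation {A : Type*} [CommRing A] (M : ℕ → Type*)
    [∀ n, AddCommGroup (M n)] [∀ n, Module A (M n)] (f : ∀ n, M (n + 1) →ₗ[A] M n)
    (hM : ∀ n, IsFiniteLength A (M n))
    (N : Type*) [AddCommGroup N] [Module A N] [Module.FinitePresentation A N] :
    Function.Bijective (fun x : ↥(InvLimit M f) ⊗[A] N =>
      (⟨fun n => LinearMap.rTensor N (limProj M f n) x, tensorMem M f N x⟩ :
        InvLimit (fun n => M n ⊗[A] N) (fun n => LinearMap.rTensor N (f n)))) := by
  have (n : ℕ) : IsArtinian A (M n) := (isFiniteLength_iff_isNoetherian_isArtinian.mp (hM n)).2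
  obtain ⟨k, m, p, g, hp, hgp⟩ := Module.FinitePresentation.exists_fin' A N
  have hlim_exact : Function.Exact (InvLimit.mapLTensor M f g) (InvLimit.mapLTensor M f p) :=
    InvLimit.map_exact _ _ _ _ fun _ => lTensor_exact _ hgp hp
  have hlim_surj : Function.Surjective (InvLimit.mapLTensor M f p) :=
    InvLimit.map_surjective _ _ fun _ => LinearMap.lTensor_surjective _ hp
  show Function.Bijective (InvLimit.limTensor M f N)
  exact LinearMap.bijective_of_surjective_of_bijective_of_right_exact
    (M₁ := InvLimit M f ⊗[A] (Fin m → A)) (M₂ := InvLimit M f ⊗[A] (Fin k → A))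
    (M₃ := InvLimit M f ⊗[A] N) (g.lTensor _) (p.lTensor _) _ _ _ _ _
    (InvLimit.mapLTensor_comp_limTensor M f g) (InvLimit.mapLTensor_comp_limTensor M f p)
    (lTensor_exact _ hgp hp) hlim_exact (InvLimit.limTensor_bijective_pi M f _).2
    (InvLimit.limTensor_bijective_pi M f _) (LinearMap.lTensor_surjective _ hp) hlim_surj
end

section
/- Let A be a commutative ring with identity and let (M_n)_{n ∈ ℕ} be an inverse system of A-modules, each of finite length. If N is a finitely generated ℤ-module (finitely generated abelian group), then the natural map (lim_n M_n) ⊗_ℤ N → lim_n (M_n ⊗_ℤ N) is an isomorphism of A-modules, where the A-module structure on each M_n ⊗_ℤ N is induced by that of M_n. -/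
open TensorProduct

lemma intTensorMem {A : Type*} [CommRing A] (M : ℕ → Type*) [∀ n, AddCommGroup (M n)]
    [∀ n, Module A (M n)] (f : ∀ n, M (n + 1) →ₗ[A] M n)
    (N : Type*) [AddCommGroup N] (x : ↥(InvLimit M f) ⊗[ℤ] N) :
    (fun n => TensorProduct.AlgebraTensorModule.map (limProj M f n)
        (LinearMap.id : N →ₗ[ℤ] N) x) ∈
      InvLimit (fun n => M n ⊗[ℤ] N)
        (fun n => TensorProduct.AlgebraTensorModule.map (f n) (LinearMap.id : N →ₗ[ℤ] N)) := by
  intro n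
  induction x using TensorProduct.induction_on with
  | zero => simp
  | tmul m y =>
      simp only [TensorProduct.AlgebraTensorModule.map_tmul, limProj_apply, LinearMap.id_apply]
      rw [invLimit_prop m n]
  | add a b ha hb => simp only [map_add, ha, hb]

private lemma atm_map_swap {A : Type*} [CommRing A] {P P' : Type*} [AddCommGroup P] [Module A P]
    [AddCommGroup P'] [Module A P'] {N N' : Type*} [AddCommGroup N] [AddCommGroup N']
    (h : P →ₗ[A] P') (u : N →ₗ[ℤ] N') (x : P ⊗[ℤ] N) :
    TensorProduct.AlgebraTensorModule.map h (LinearMap.id : N' →ₗ[ℤ] N')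
        (TensorProduct.AlgebraTensorModule.map (LinearMap.id : P →ₗ[A] P) u x) =
      TensorProduct.AlgebraTensorModule.map (LinearMap.id : P' →ₗ[A] P') u
        (TensorProduct.AlgebraTensorModule.map h (LinearMap.id : N →ₗ[ℤ] N) x) := by
  induction x using TensorProduct.induction_on with
  | zero => simp
  | tmul m y => simp
  | add a b ha hb => simp [ha, hb]

private lemma atm_map_eq_lTensor {A : Type*} [CommRing A] {P : Type*} [AddCommGroup P] [Module A P]
    {N N' : Type*} [AddCommGroup N] [AddCommGroup N'] (u : N →ₗ[ℤ] N') (x : P ⊗[ℤ] N) :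
    TensorProduct.AlgebraTensorModule.map (LinearMap.id : P →ₗ[A] P) u x =
      LinearMap.lTensor P u x := by
  induction x using TensorProduct.induction_on with
  | zero => simp
  | tmul m y => simp
  | add a b ha hb => simp [ha, hb]

private lemma psr_nat {A : Type*} [CommRing A] {P P' : Type*} [AddCommGroup P] [Module A P]
    [AddCommGroup P'] [Module A P'] (r : ℕ) (h : P →ₗ[A] P') (x : P ⊗[ℤ] (Fin r → ℤ)) (i : Fin r) :
    TensorProduct.piScalarRight ℤ A P' (Fin r)
        (TensorProduct.AlgebraTensorModule.map h
          (LinearMap.id : (Fin r → ℤ) →ₗ[ℤ] (Fin r → ℤ)) x) i =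
      h (TensorProduct.piScalarRight ℤ A P (Fin r) x i) := by
  induction x using TensorProduct.induction_on with
  | zero => simp
  | tmul m v =>
      simp only [TensorProduct.AlgebraTensorModule.map_tmul, LinearMap.id_apply,
        TensorProduct.piScalarRight_apply, TensorProduct.piScalarRightHom_tmul]
      rw [map_zsmul]
  | add a b ha hb => simp only [map_add, Pi.add_apply, ha, hb]

private lemma free_bij {A : Type*} [CommRing A] (M : ℕ → Type*) [∀ n, AddCommGroup (M n)]
    [∀ n, Module A (M n)] (f : ∀ n, M (n + 1) →ₗ[A] M n) (r : ℕ) :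
    Function.Bijective (fun x : ↥(InvLimit M f) ⊗[ℤ] (Fin r → ℤ) =>
      (⟨fun n => TensorProduct.AlgebraTensorModule.map (limProj M f n)
          (LinearMap.id : (Fin r → ℤ) →ₗ[ℤ] (Fin r → ℤ)) x,
        intTensorMem M f (Fin r → ℤ) x⟩ :
        InvLimit (fun n => M n ⊗[ℤ] (Fin r → ℤ))
          (fun n => TensorProduct.AlgebraTensorModule.map (f n)
            (LinearMap.id : (Fin r → ℤ) →ₗ[ℤ] (Fin r → ℤ))))) := by
  constructor
  · intro x y hxy
    have hc : ∀ n, TensorProduct.AlgebraTensorModule.map (limProj M f n)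
        (LinearMap.id : (Fin r → ℤ) →ₗ[ℤ] (Fin r → ℤ)) x =
        TensorProduct.AlgebraTensorModule.map (limProj M f n)
        (LinearMap.id : (Fin r → ℤ) →ₗ[ℤ] (Fin r → ℤ)) y :=
      fun n => congrFun (congrArg Subtype.val hxy) n
    apply (TensorProduct.piScalarRight ℤ A (↥(InvLimit M f)) (Fin r)).injective
    funext i
    apply Subtype.ext
    funext n
    have h1 := psr_nat r (limProj M f n) x i
    have h2 := psr_nat r (limProj M f n) y i
    rw [hc n] at h1
    have := h1.symm.trans h2
    simpa using this
  · intro y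
    let m : Fin r → ∀ n, M n := fun i n => TensorProduct.piScalarRight ℤ A (M n) (Fin r) (y.1 n) i
    have hm : ∀ i, m i ∈ InvLimit M f := by
      intro i n
      have h1 := psr_nat r (f n) (y.1 (n+1)) i
      rw [invLimit_prop y n] at h1
      exact h1.symm
    refine ⟨(TensorProduct.piScalarRight ℤ A (↥(InvLimit M f)) (Fin r)).symm
      (fun i => ⟨m i, hm i⟩), ?_⟩
    apply Subtype.ext
    funext n
    apply (TensorProduct.piScalarRight ℤ A (M n) (Fin r)).injective
    funext i
    rw [psr_nat, LinearEquiv.apply_symm_apply]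
    rfl

private theorem ml_lift {A : Type*} [CommRing A] (P : ℕ → Type*) [∀ n, AddCommGroup (P n)]
    [∀ n, Module A (P n)]
    (Q : ℕ → Type*) [∀ n, AddCommGroup (Q n)] [∀ n, Module A (Q n)]
    (fP : ∀ n, P (n+1) →ₗ[A] P n) (fQ : ∀ n, Q (n+1) →ₗ[A] Q n)
    (g : ∀ n, P n →ₗ[A] Q n)
    (hcompat : ∀ n x, g n (fP n x) = fQ n (g (n+1) x))
    (hart : ∀ n, IsArtinian A (P n))
    (z : ∀ n, Q n) (hz : ∀ n, fQ n (z (n+1)) = z n)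
    (hrange : ∀ n, z n ∈ LinearMap.range (g n)) :
    ∃ p : ∀ n, P n, (∀ n, fP n (p (n+1)) = p n) ∧ ∀ n, g n (p n) = z n := by
  classical
  let F : (∀ n, P n) →ₗ[A] (∀ n, P n) :=
    LinearMap.pi fun n => (fP n).comp (LinearMap.proj (n+1))
  have hFapp : ∀ (x : ∀ n, P n) (n : ℕ), F x n = fP n (x (n+1)) := fun _ _ => rfl
  let Fib : Set (∀ n, P n) := {x | ∀ n, g n (x n) = z n}
  have hFibne : ∃ x, x ∈ Fib :=
    ⟨fun n => (hrange n).choose, fun n => (hrange n).choose_spec⟩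
  have hFibF : ∀ x, x ∈ Fib → F x ∈ Fib := by
    intro x hx n
    rw [hFapp, hcompat, hx (n+1), hz]
  let Ks : Submodule A (∀ n, P n) := Submodule.pi Set.univ fun n => LinearMap.ker (g n)
  have hKsF : ∀ x, x ∈ Ks → F x ∈ Ks := by
    intro x hx
    rw [Submodule.mem_pi] at hx ⊢
    intro n _
    rw [LinearMap.mem_ker, hFapp, hcompat, LinearMap.mem_ker.mp (hx (n+1) trivial), map_zero]
  have hdiff : ∀ x y, x ∈ Fib → y ∈ Fib → x - y ∈ Ks := by
    intro x y hx hy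
    rw [Submodule.mem_pi]
    intro n _
    rw [LinearMap.mem_ker]
    simp [hx n, hy n]
  have hadd : ∀ x w, x ∈ Fib → w ∈ Ks → x + w ∈ Fib := by
    intro x w hx hw n
    rw [Submodule.mem_pi] at hw
    have := LinearMap.mem_ker.mp (hw n trivial)
    simp [hx n, this]
  let Im : ∀ (n : ℕ), ℕ → Set (P n) := fun n k => (fun x => (F ^ k) x n) '' Fib
  let D : ∀ (n : ℕ), ℕ → Submodule A (P n) := fun n k =>
    Submodule.map ((LinearMap.proj n).comp (F ^ k : (∀ n, P n) →ₗ[A] ∀ n, P n)) Ks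
  have hImStep : ∀ n k, Im n (k+1) ⊆ Im n k := by
    rintro n k _ ⟨x, hx, rfl⟩
    exact ⟨F x, hFibF x hx, by simp [pow_succ, Module.End.mul_apply]⟩
  have hImAnti : ∀ n, Antitone (Im n) := fun n =>
    antitone_nat_of_succ_le fun k => hImStep n k
  have hDAnti : ∀ n, Antitone (D n) := by
    intro n
    apply antitone_nat_of_succ_le
    rintro k _ ⟨x, hx, rfl⟩
    exact ⟨F x, hKsF x hx, by simp [pow_succ, Module.End.mul_apply]⟩
  have hstabex : ∀ n, ∃ k₀, ∀ k, k₀ ≤ k → D n k = D n k₀ := by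
    intro n
    haveI := hart n
    obtain ⟨k₀, h⟩ := IsArtinian.monotone_stabilizes
      (⟨fun k => OrderDual.toDual (D n k), fun k l hkl => hDAnti n hkl⟩ : ℕ →o (Submodule A (P n))ᵒᵈ)
    exact ⟨k₀, fun k hk => (h k hk).symm⟩
  choose k₀ hk₀ using hstabex
  have hImne : ∀ n k, ∃ x, x ∈ Im n k := fun n k =>
    ⟨_, hFibne.choose, hFibne.choose_spec, rfl⟩
  have hdiffD : ∀ n k x y, x ∈ Im n k → y ∈ Im n k → x - y ∈ D n k := by
    rintro n k _ _ ⟨u, hu, rfl⟩ ⟨v, hv, rfl⟩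
    exact ⟨u - v, hdiff u v hu hv, by simp⟩
  have htransIm : ∀ n k y d, y ∈ Im n k → d ∈ D n k → y + d ∈ Im n k := by
    rintro n k _ _ ⟨v, hv, rfl⟩ ⟨w, hw, rfl⟩
    exact ⟨v + w, hadd v w hv hw, by simp⟩
  have hstab : ∀ n k, Im n (k₀ n) ⊆ Im n k := by
    intro n k x hx
    rcases le_total k (k₀ n) with h | h
    · exact hImAnti n h hx
    · obtain ⟨y, hy⟩ := hImne n k
      have hy' : y ∈ Im n (k₀ n) := hImAnti n h hy
      have hd : x - y ∈ D n k := by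
        rw [hk₀ n k h]
        exact hdiffD n (k₀ n) x y hx hy'
      have := htransIm n k y (x - y) hy hd
      simpa using this
  have hsurjT : ∀ n (x : P n), x ∈ Im n (k₀ n) →
      ∃ x' : P (n+1), x' ∈ Im (n+1) (k₀ (n+1)) ∧ fP n x' = x := by
    intro n x hx
    obtain ⟨u, hu, rfl⟩ := hstab n (k₀ (n+1) + 1) hx
    refine ⟨(F ^ k₀ (n+1)) u (n+1), ⟨u, hu, rfl⟩, ?_⟩
    rw [← hFapp]
    simp [pow_succ', Module.End.mul_apply]
  have hTfib : ∀ n (x : P n), x ∈ Im n (k₀ n) → g n x = z n := by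
    intro n x hx
    obtain ⟨u, hu, rfl⟩ := hstab n 0 hx
    simpa using hu n
  let c : ∀ n, {p : P n // p ∈ Im n (k₀ n)} := fun n =>
    Nat.rec ⟨(hImne 0 (k₀ 0)).choose, (hImne 0 (k₀ 0)).choose_spec⟩
      (fun m ih => ⟨(hsurjT m ih.1 ih.2).choose, (hsurjT m ih.1 ih.2).choose_spec.1⟩) n
  refine ⟨fun n => (c n).1, fun n => ?_, fun n => hTfib n _ (c n).2⟩
  exact (hsurjT n (c n).1 (c n).2).choose_spec.2


/-- Lemma 2.1(b): for an inverse system `(M n)` of `A`-modules of finite length and a finitely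
generated `ℤ`-module `N`, the natural map `(lim M n) ⊗_ℤ N → lim (M n ⊗_ℤ N)` is an isomorphism
of `A`-modules (the `A`-module structure on `M n ⊗_ℤ N` being induced by that of `M n`). -/
theorem tensor_limit_int {A : Type*} [CommRing A] (M : ℕ → Type*)
    [∀ n, AddCommGroup (M n)] [∀ n, Module A (M n)] (f : ∀ n, M (n + 1) →ₗ[A] M n)
    (hM : ∀ n, IsFiniteLength A (M n))
    (N : Type*) [AddCommGroup N] [AddGroup.FG N] :
    Function.Bijective (fun x : ↥(InvLimit M f) ⊗[ℤ] N =>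
      (⟨fun n => TensorProduct.AlgebraTensorModule.map (limProj M f n)
          (LinearMap.id : N →ₗ[ℤ] N) x, intTensorMem M f N x⟩ :
        InvLimit (fun n => M n ⊗[ℤ] N)
          (fun n => TensorProduct.AlgebraTensorModule.map (f n) (LinearMap.id : N →ₗ[ℤ] N)))) := by
  classical
  haveI : Module.Finite ℤ N := Module.Finite.iff_addGroup_fg.mpr ‹_›
  obtain ⟨r, π, hπ⟩ := Module.Finite.exists_fin' ℤ N
  obtain ⟨s, γ', hγ'⟩ := Module.Finite.exists_fin' ℤ ↥(LinearMap.ker π)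
  let γ : (Fin s → ℤ) →ₗ[ℤ] (Fin r → ℤ) := (LinearMap.ker π).subtype.comp γ'
  have hπγ : ∀ v, π (γ v) = 0 := fun v => LinearMap.mem_ker.mp (γ' v).2
  have hexact : Function.Exact γ π := by
    intro x
    constructor
    · intro hx
      obtain ⟨y, hy⟩ := hγ' ⟨x, LinearMap.mem_ker.mpr hx⟩
      exact ⟨y, congrArg Subtype.val hy⟩
    · rintro ⟨y, rfl⟩
      exact hπγ y
  have hart : ∀ (k n : ℕ), IsArtinian A (M n ⊗[ℤ] (Fin k → ℤ)) := by
    intro k n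
    haveI := (isFiniteLength_iff_isNoetherian_isArtinian.mp (hM n)).2
    exact isArtinian_of_linearEquiv (TensorProduct.piScalarRight ℤ A (M n) (Fin k)).symm
  have hGπ_surj : ∀ n, Function.Surjective (fun w => TensorProduct.AlgebraTensorModule.map
      (LinearMap.id : M n →ₗ[A] M n) π w) := by
    intro n w
    obtain ⟨v, hv⟩ := LinearMap.lTensor_surjective (M n) hπ w
    exact ⟨v, (atm_map_eq_lTensor π v).trans hv⟩
  have hexact_t : ∀ n (w : M n ⊗[ℤ] (Fin r → ℤ)),
      TensorProduct.AlgebraTensorModule.map (LinearMap.id : M n →ₗ[A] M n) π w = 0 →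
      ∃ v, TensorProduct.AlgebraTensorModule.map (LinearMap.id : M n →ₗ[A] M n) γ v = w := by
    intro n w hw
    have hmem := (lTensor_exact (M n) hexact hπ w).mp
      ((atm_map_eq_lTensor (A := A) π w).symm.trans hw)
    obtain ⟨v, hv⟩ := hmem
    exact ⟨v, (atm_map_eq_lTensor γ v).trans hv⟩
  constructor
  · -- injectivity
    intro x₁ x₂ h12
    rw [← sub_eq_zero]
    set x := x₁ - x₂ with hxdef
    have hz : ∀ n, TensorProduct.AlgebraTensorModule.map (limProj M f n)
        (LinearMap.id : N →ₗ[ℤ] N) x = 0 := by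
      intro n
      have h := congrFun (congrArg Subtype.val h12) n
      rw [hxdef, map_sub]
      simp only at h
      rw [h, sub_self]
    obtain ⟨w, hw⟩ : ∃ w, TensorProduct.AlgebraTensorModule.map
        (LinearMap.id : ↥(InvLimit M f) →ₗ[A] ↥(InvLimit M f)) π w = x := by
      obtain ⟨w, hw⟩ := LinearMap.lTensor_surjective (↥(InvLimit M f)) hπ x
      exact ⟨w, (atm_map_eq_lTensor π w).trans hw⟩
    have hker : ∀ n, TensorProduct.AlgebraTensorModule.map (LinearMap.id : M n →ₗ[A] M n) π
        (TensorProduct.AlgebraTensorModule.map (limProj M f n)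
          (LinearMap.id : (Fin r → ℤ) →ₗ[ℤ] (Fin r → ℤ)) w) = 0 := by
      intro n
      rw [← atm_map_swap (limProj M f n) π w, hw]
      exact hz n
    obtain ⟨u, hu1, hu2⟩ := ml_lift (fun n => M n ⊗[ℤ] (Fin s → ℤ))
      (fun n => M n ⊗[ℤ] (Fin r → ℤ))
      (fun n => TensorProduct.AlgebraTensorModule.map (f n)
        (LinearMap.id : (Fin s → ℤ) →ₗ[ℤ] (Fin s → ℤ)))
      (fun n => TensorProduct.AlgebraTensorModule.map (f n)
        (LinearMap.id : (Fin r → ℤ) →ₗ[ℤ] (Fin r → ℤ)))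
      (fun n => TensorProduct.AlgebraTensorModule.map (LinearMap.id : M n →ₗ[A] M n) γ)
      (fun n v => (atm_map_swap (f n) γ v).symm)
      (fun n => hart s n)
      (fun n => TensorProduct.AlgebraTensorModule.map (limProj M f n)
        (LinearMap.id : (Fin r → ℤ) →ₗ[ℤ] (Fin r → ℤ)) w)
      (fun n => intTensorMem M f (Fin r → ℤ) w n)
      (fun n => by
        obtain ⟨v, hv⟩ := hexact_t n _ (hker n)
        exact LinearMap.mem_range.mpr ⟨v, hv⟩)
    obtain ⟨v, hv⟩ := (free_bij M f s).2 ⟨u, hu1⟩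
    have hvw : TensorProduct.AlgebraTensorModule.map
        (LinearMap.id : ↥(InvLimit M f) →ₗ[A] ↥(InvLimit M f)) γ v = w := by
      apply (free_bij M f r).1
      apply Subtype.ext
      funext n
      show TensorProduct.AlgebraTensorModule.map (limProj M f n)
          (LinearMap.id : (Fin r → ℤ) →ₗ[ℤ] (Fin r → ℤ))
          (TensorProduct.AlgebraTensorModule.map LinearMap.id γ v) =
        TensorProduct.AlgebraTensorModule.map (limProj M f n)
          (LinearMap.id : (Fin r → ℤ) →ₗ[ℤ] (Fin r → ℤ)) w
      rw [atm_map_swap (limProj M f n) γ v]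
      have hun : TensorProduct.AlgebraTensorModule.map (limProj M f n)
          (LinearMap.id : (Fin s → ℤ) →ₗ[ℤ] (Fin s → ℤ)) v = u n :=
        congrFun (congrArg Subtype.val hv) n
      rw [hun, hu2 n]
    rw [← hvw] at hw
    rw [← hw]
    have hzero : ∀ v₀ : ↥(InvLimit M f) ⊗[ℤ] (Fin s → ℤ),
        TensorProduct.AlgebraTensorModule.map
          (LinearMap.id : ↥(InvLimit M f) →ₗ[A] ↥(InvLimit M f)) π
          (TensorProduct.AlgebraTensorModule.map
            (LinearMap.id : ↥(InvLimit M f) →ₗ[A] ↥(InvLimit M f)) γ v₀) = 0 := by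
      intro v₀
      induction v₀ using TensorProduct.induction_on with
      | zero => simp
      | tmul m y => simp [hπγ]
      | add a b ha hb => simp [ha, hb]
    exact hzero v
  · -- surjectivity
    intro y
    obtain ⟨p, hp1, hp2⟩ := ml_lift (fun n => M n ⊗[ℤ] (Fin r → ℤ))
      (fun n => M n ⊗[ℤ] N)
      (fun n => TensorProduct.AlgebraTensorModule.map (f n)
        (LinearMap.id : (Fin r → ℤ) →ₗ[ℤ] (Fin r → ℤ)))
      (fun n => TensorProduct.AlgebraTensorModule.map (f n) (LinearMap.id : N →ₗ[ℤ] N))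
      (fun n => TensorProduct.AlgebraTensorModule.map (LinearMap.id : M n →ₗ[A] M n) π)
      (fun n v => (atm_map_swap (f n) π v).symm)
      (fun n => hart r n)
      y.1 (fun n => y.2 n)
      (fun n => LinearMap.mem_range.mpr (hGπ_surj n (y.1 n)))
    obtain ⟨w, hw⟩ := (free_bij M f r).2 ⟨p, hp1⟩
    refine ⟨TensorProduct.AlgebraTensorModule.map
      (LinearMap.id : ↥(InvLimit M f) →ₗ[A] ↥(InvLimit M f)) π w, ?_⟩
    apply Subtype.ext
    funext n
    show TensorProduct.AlgebraTensorModule.map (limProj M f n)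
        (LinearMap.id : N →ₗ[ℤ] N)
        (TensorProduct.AlgebraTensorModule.map LinearMap.id π w) = y.1 n
    rw [atm_map_swap (limProj M f n) π w]
    have hwn : TensorProduct.AlgebraTensorModule.map (limProj M f n)
        (LinearMap.id : (Fin r → ℤ) →ₗ[ℤ] (Fin r → ℤ)) w = p n :=
      congrFun (congrArg Subtype.val hw) n
    rw [hwn]
    exact hp2 n
end
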